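/- For 0 < d < 2r there is no κ-constrained curve (κ = 1/r) from x to y whose interior image lies entirely in E = int(D₁ ∪ D₂) \ cl(I), where D₁, D₂ are the two radius-r disks through x, y and I = int(D₁ ∩ D₂). -/

import Mathlib

/-!
`E` is the disjoint union of the two open crescents `ball cᵢ r \ closedBall cⱼ r`, so by
connectedness the open arc `σ '' Ioo 0 s` lies in one of them, say the one around `c₁`.
Slide the centre of the disk from `c₁` to `c₂` along `lineMap c₁ c₂ μ` and let `μ₀` be the largest
`μ` for which the disk still contains the curve. Then `0 < μ₀`, because the curve meets the
circle around `c₁` only at its endpoints, which lie on the `c₂`-side of `c₁`; and `μ₀ < 1`, because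
the curve leaves the disk around `c₂`. But curvature at most `1 / r` makes `‖σ - c‖²` convex while
the curve stays in a disk of radius `r` around `c`, so the curve lies within the larger endpoint
distance from the centre, and for `0 < μ < 1` both endpoints are strictly inside the disk: it can
slide beyond `μ₀`.
-/

open Set Metric

noncomputable section

abbrev Plane := EuclideanSpace ℝ (Fin 2)

def IsKConstrained (κ s : ℝ) (σ σ' σ'' : ℝ → Plane) : Prop :=
  0 ≤ s ∧
  (∀ t ∈ Icc (0:ℝ) s, HasDerivAt σ (σ' t) t) ∧
  ContinuousOn σ' (Icc 0 s) ∧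
  (∀ t ∈ Icc (0:ℝ) s, ‖σ' t‖ = 1) ∧
  ∃ F : Finset ℝ, ∀ t ∈ Icc (0:ℝ) s, t ∉ F →
    HasDerivAt σ' (σ'' t) t ∧ ‖σ'' t‖ ≤ κ

open Filter Topology AffineMap
open scoped RealInnerProductSpace

theorem monotoneOn_Icc_of_hasDerivAt_nonneg_off_finset {f f' : ℝ → ℝ} (F : Finset ℝ) :
    ∀ {a b : ℝ}, ContinuousOn f (Icc a b) →
      (∀ x ∈ Ioo a b, x ∉ F → HasDerivAt f (f' x) x) →
      (∀ x ∈ Ioo a b, x ∉ F → 0 ≤ f' x) → MonotoneOn f (Icc a b) := by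
  induction F using Finset.induction_on with
  | empty =>
    intro a b hf hderiv hnonneg
    refine monotoneOn_of_hasDerivWithinAt_nonneg (f' := f') (convex_Icc a b) hf (fun x hx => ?_)
      (fun x hx => ?_) <;> rw [interior_Icc] at hx
    · exact (hderiv x hx (Finset.notMem_empty x)).hasDerivWithinAt
    · exact hnonneg x hx (Finset.notMem_empty x)
  | insert m F _ ih =>
    intro a b hf hderiv hnonneg
    by_cases hm : m ∈ Ioo a b
    · have hleft : MonotoneOn f (Icc a m) :=
        ih (hf.mono (Icc_subset_Icc_right hm.2.le))
          (fun x hx hxF => hderiv x ⟨hx.1, hx.2.trans hm.2⟩ (by simp [hxF, hx.2.ne]))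
          (fun x hx hxF => hnonneg x ⟨hx.1, hx.2.trans hm.2⟩ (by simp [hxF, hx.2.ne]))
      have hright : MonotoneOn f (Icc m b) :=
        ih (hf.mono (Icc_subset_Icc_left hm.1.le))
          (fun x hx hxF => hderiv x ⟨hm.1.trans hx.1, hx.2⟩ (by simp [hxF, hx.1.ne']))
          (fun x hx hxF => hnonneg x ⟨hm.1.trans hx.1, hx.2⟩ (by simp [hxF, hx.1.ne']))
      rw [← Icc_union_Icc_eq_Icc hm.1.le hm.2.le]
      exact hleft.union_right hright (isGreatest_Icc hm.1.le) (isLeast_Icc hm.2.le)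
    · exact ih hf (fun x hx hxF => hderiv x hx (by simp [hxF, ne_of_mem_of_not_mem hx hm]))
        (fun x hx hxF => hnonneg x hx (by simp [hxF, ne_of_mem_of_not_mem hx hm]))

section KConstrained

variable {κ r s : ℝ} {σ σ' σ'' : ℝ → Plane}

theorem IsKConstrained.continuousOn (hσ : IsKConstrained κ s σ σ' σ'') :
    ContinuousOn σ (Icc 0 s) :=
  fun t ht => (hσ.2.1 t ht).continuousAt.continuousWithinAt

/-- Inside a disk of radius `r`, curvature at most `1 / r` forces
`(‖σ - c‖²)'' = 2 (‖σ'‖² + ⟪σ - c, σ''⟫) ≥ 2 (1 - r · (1 / r)) ≥ 0`. -/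
theorem IsKConstrained.convexOn_sq_norm_sub {c : Plane} (hσ : IsKConstrained (1 / r) s σ σ' σ'')
    (hball : MapsTo σ (Icc 0 s) (closedBall c r)) :
    ConvexOn ℝ (Icc 0 s) fun t => ‖σ t - c‖ ^ 2 := by
  have hσc := hσ.continuousOn
  obtain ⟨-, hderiv, hσ'c, hunit, F, hF⟩ := hσ
  have hu : ∀ t ∈ Icc 0 s, HasDerivAt (fun t => ‖σ t - c‖ ^ 2) (2 * ⟪σ t - c, σ' t⟫) t :=
    fun t ht => ((hderiv t ht).sub_const c).norm_sq
  have hmono : MonotoneOn (fun t => 2 * ⟪σ t - c, σ' t⟫) (Icc 0 s) := by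
    refine monotoneOn_Icc_of_hasDerivAt_nonneg_off_finset
      (f' := fun t => 2 * (⟪σ t - c, σ'' t⟫ + ⟪σ' t, σ' t⟫)) F
      (continuousOn_const.mul ((hσc.sub continuousOn_const).inner hσ'c))
      (fun t ht htF => (((hderiv t (Ioo_subset_Icc_self ht)).sub_const c).inner ℝ
        (hF t (Ioo_subset_Icc_self ht) htF).1).const_mul 2) (fun t ht htF => ?_)
    have ht := Ioo_subset_Icc_self ht
    have hcurv : ‖σ t - c‖ * ‖σ'' t‖ ≤ 1 :=
      calc ‖σ t - c‖ * ‖σ'' t‖ ≤ r * (1 / r) :=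
            mul_le_mul (mem_closedBall_iff_norm.1 (hball ht)) (hF t ht htF).2 (norm_nonneg _)
              (dist_nonneg.trans (hball ht))
        _ ≤ 1 := (mul_one_div r r).trans_le (div_self_le_one r)
    have := neg_le_of_abs_le ((abs_real_inner_le_norm (σ t - c) (σ'' t)).trans hcurv)
    rw [real_inner_self_eq_norm_sq, hunit t ht]
    linarith
  refine MonotoneOn.convexOn_of_deriv (convex_Icc 0 s)
    (fun t ht => (hu t ht).continuousAt.continuousWithinAt) ?_ ?_ <;> rw [interior_Icc]
  · exact fun t ht => (hu t (Ioo_subset_Icc_self ht)).differentiableAt.differentiableWithinAt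
  · exact (hmono.mono Ioo_subset_Icc_self).congr
      fun t ht => (hu t (Ioo_subset_Icc_self ht)).deriv.symm

theorem IsKConstrained.mapsTo_closedBall_max {c : Plane} (hσ : IsKConstrained (1 / r) s σ σ' σ'')
    (hball : MapsTo σ (Icc 0 s) (closedBall c r)) :
    MapsTo σ (Icc 0 s) (closedBall c (max (dist (σ 0) c) (dist (σ s) c))) := by
  intro t ht
  have hs : 0 ≤ s := hσ.1
  have := (hσ.convexOn_sq_norm_sub hball).le_on_segment (left_mem_Icc.2 hs) (right_mem_Icc.2 hs)
    (by rwa [segment_eq_Icc hs])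
  simp only [← dist_eq_norm] at this
  rcases le_max_iff.1 this with h | h
  · exact le_max_of_le_left ((sq_le_sq₀ dist_nonneg dist_nonneg).1 h)
  · exact le_max_of_le_right ((sq_le_sq₀ dist_nonneg dist_nonneg).1 h)

end KConstrained

def crescent {P : Type*} [PseudoMetricSpace P] (c₁ c₂ : P) (r : ℝ) : Set P :=
  ball c₁ r \ closedBall c₂ r

section Crescent

variable {P : Type*} [PseudoMetricSpace P] {c₁ c₂ : P} {r : ℝ}

theorem isOpen_crescent : IsOpen (crescent c₁ c₂ r) :=
  isOpen_ball.sdiff isClosed_closedBall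

theorem disjoint_crescent_swap : Disjoint (crescent c₁ c₂ r) (crescent c₂ c₁ r) :=
  disjoint_left.2 fun _ h₁₂ h₂₁ => h₂₁.2 (ball_subset_closedBall h₁₂.1)

theorem crescent_subset_ball : crescent c₁ c₂ r ⊆ ball c₁ r :=
  sdiff_subset

end Crescent

theorem interior_union_diff_closure_interior_inter_subset_crescent {E : Type*}
    [NormedAddCommGroup E] [NormedSpace ℝ E] [Nontrivial E] {c₁ c₂ : E} {r : ℝ}
    (hlens : (interior (closedBall c₁ r ∩ closedBall c₂ r)).Nonempty) :
    interior (closedBall c₁ r ∪ closedBall c₂ r) \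
        closure (interior (closedBall c₁ r ∩ closedBall c₂ r)) ⊆
      crescent c₁ c₂ r ∪ crescent c₂ c₁ r := by
  have hconv : Convex ℝ (closedBall c₁ r ∩ closedBall c₂ r) :=
    (convex_closedBall c₁ r).inter (convex_closedBall c₂ r)
  rw [hconv.closure_interior_eq_closure_of_nonempty_interior hlens,
    (isClosed_closedBall.inter isClosed_closedBall).closure_eq]
  rintro p ⟨hunion, hout⟩
  rcases isClosed_closedBall.interior_union_right hunion with h₁ | h₂
  · rw [interior_closedBall'] at h₁
    exact Or.inl ⟨h₁, fun h₂ => hout ⟨ball_subset_closedBall h₁, h₂⟩⟩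
  · rcases isClosed_closedBall.interior_union_left hunion with h₁ | h₂'
    · exact absurd ⟨h₁, h₂⟩ hout
    · rw [interior_closedBall'] at h₂'
      exact Or.inr ⟨h₂', fun h₁ => hout ⟨h₁, h₂⟩⟩

section InnerProductSpace

variable {E : Type*} [NormedAddCommGroup E] [InnerProductSpace ℝ E]

theorem inner_sub_sub_pos_of_dist_eq {p c₁ c₂ : E} (h : dist p c₁ = dist p c₂) (hc : c₁ ≠ c₂) :
    0 < ⟪p - c₁, c₂ - c₁⟫ := by
  have hexp := norm_sub_sq_real (p - c₁) (c₂ - c₁)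
  rw [sub_sub_sub_cancel_right, ← dist_eq_norm, ← dist_eq_norm, ← h] at hexp
  have : 0 < ‖c₂ - c₁‖ := norm_pos_iff.2 (sub_ne_zero.2 hc.symm)
  nlinarith

theorem dist_smul_add_le_of_le_inner {p c w : E} {r δ ε : ℝ} (hp : dist p c ≤ r)
    (hδ : δ ≤ ⟪p - c, w⟫) (hε : 0 ≤ ε) (hεw : ε * ‖w‖ ^ 2 ≤ 2 * δ) :
    dist p (ε • w + c) ≤ r := by
  have hexp : dist p (ε • w + c) ^ 2 = dist p c ^ 2 - 2 * ε * ⟪p - c, w⟫ + ε * (ε * ‖w‖ ^ 2) := by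
    rw [dist_eq_norm, dist_eq_norm, sub_add_eq_sub_sub_swap, norm_sub_sq_real, inner_smul_right,
      norm_smul, Real.norm_of_nonneg hε]
    ring
  have hp2 : dist p c ^ 2 ≤ r ^ 2 := pow_le_pow_left₀ dist_nonneg hp 2
  refine (sq_le_sq₀ dist_nonneg (dist_nonneg.trans hp)).1 ?_
  nlinarith [mul_le_mul_of_nonneg_left hδ hε, mul_le_mul_of_nonneg_left hεw hε]

theorem eventually_mapsTo_closedBall_lineMap {σ : ℝ → E} {s r : ℝ} {c₁ c₂ : E}
    (hσ : ContinuousOn σ (Icc 0 s)) (hball : MapsTo σ (Icc 0 s) (closedBall c₁ r))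
    (hin : MapsTo σ (Ioo 0 s) (ball c₁ r))
    (h0 : 0 < ⟪σ 0 - c₁, c₂ - c₁⟫) (hs : 0 < ⟪σ s - c₁, c₂ - c₁⟫) :
    ∀ᶠ ε in 𝓝[>] (0 : ℝ), MapsTo σ (Icc 0 s) (closedBall (lineMap c₁ c₂ ε) r) := by
  set w := c₂ - c₁
  set g : ℝ → ℝ := fun t => ⟪σ t - c₁, w⟫
  set δ := min (g 0) (g s) / 2
  have hδ : 0 < δ := half_pos (lt_min h0 hs)
  have hδ0 : δ < g 0 := (half_lt_self (lt_min h0 hs)).trans_le (min_le_left _ _)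
  have hδs : δ < g s := (half_lt_self (lt_min h0 hs)).trans_le (min_le_right _ _)
  -- Off `K` the move brings the curve closer to the centre; on the compact `K ⊆ Ioo 0 s`
  -- the curve has room to spare.
  set K := Icc 0 s ∩ g ⁻¹' Iic δ
  have hg : ContinuousOn g (Icc 0 s) := (hσ.sub continuousOn_const).inner continuousOn_const
  have hK : IsCompact K := isCompact_Icc.of_isClosed_subset
    (hg.preimage_isClosed_of_isClosed isClosed_Icc isClosed_Iic) inter_subset_left
  have hKin : ∀ t ∈ K, 0 < r - dist (σ t) c₁ := by
    rintro t ⟨ht, htδ⟩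
    have ht0 : t ≠ 0 := by rintro rfl; exact (not_le.2 hδ0) htδ
    have hts : t ≠ s := by rintro rfl; exact (not_le.2 hδs) htδ
    exact sub_pos.2 (hin ⟨ht.1.lt_of_ne' ht0, ht.2.lt_of_ne hts⟩)
  obtain ⟨a, ha, hKa⟩ := hK.exists_forall_le' (f := fun t => r - dist (σ t) c₁)
    (continuousOn_const.sub
      ((continuous_id.dist continuous_const).comp_continuousOn (hσ.mono inter_subset_left))) hKin
  have hw : 0 < ‖w‖ := norm_pos_iff.2 fun hw => by simp [hw] at h0
  have hε₀ : 0 < min (a / ‖w‖) (2 * δ / ‖w‖ ^ 2) := by positivity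
  filter_upwards [Ioo_mem_nhdsGT hε₀] with ε hε t ht
  have hεw : ε * ‖w‖ < a := (lt_div_iff₀ hw).1 (hε.2.trans_le (min_le_left _ _))
  have hεw2 : ε * ‖w‖ ^ 2 < 2 * δ :=
    (lt_div_iff₀ (by positivity)).1 (hε.2.trans_le (min_le_right _ _))
  rw [mem_closedBall, lineMap_apply_module']
  by_cases htK : g t ≤ δ
  · calc dist (σ t) (ε • w + c₁) ≤ dist (σ t) c₁ + dist c₁ (ε • w + c₁) := dist_triangle _ _ _
      _ = dist (σ t) c₁ + ε * ‖w‖ := by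
          rw [dist_comm c₁, dist_add_self_left, norm_smul, Real.norm_of_nonneg hε.1.le]
      _ ≤ r := by linarith [hKa t ⟨ht, htK⟩]
  · exact dist_smul_add_le_of_le_inner (hball ht) (not_le.1 htK).le hε.1.le hεw2.le

end InnerProductSpace

section SlidingDisk

variable {r s : ℝ} {σ σ' σ'' : ℝ → Plane} {c₁ c₂ : Plane}

theorem IsKConstrained.exists_gt_mapsTo_closedBall_lineMap (hσ : IsKConstrained (1 / r) s σ σ' σ'')
    (h0₁ : dist (σ 0) c₁ = r) (h0₂ : dist (σ 0) c₂ = r)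
    (hs₁ : dist (σ s) c₁ = r) (hs₂ : dist (σ s) c₂ = r) (hc : c₁ ≠ c₂) {μ : ℝ} (hμ : μ ∈ Ioo 0 1)
    (hball : MapsTo σ (Icc 0 s) (closedBall (lineMap c₁ c₂ μ) r)) :
    ∃ μ' ∈ Ioc μ 1, MapsTo σ (Icc 0 s) (closedBall (lineMap c₁ c₂ μ') r) := by
  have hinside : ∀ p, dist p c₁ = r → dist p c₂ = r → dist p (lineMap c₁ c₂ μ) < r :=
    fun p h₁ h₂ => mem_ball'.1 <| openSegment_subset_ball_of_ne (mem_closedBall'.2 h₁.le)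
      (mem_closedBall'.2 h₂.le) hc (lineMap_mem_openSegment ℝ c₁ c₂ hμ)
  set ρ := max (dist (σ 0) (lineMap c₁ c₂ μ)) (dist (σ s) (lineMap c₁ c₂ μ))
  have hρ : ρ < r := max_lt (hinside _ h0₁ h0₂) (hinside _ hs₁ hs₂)
  have hd : 0 < dist c₁ c₂ := dist_pos.2 hc
  set η := min (1 - μ) ((r - ρ) / dist c₁ c₂)
  have hη : 0 < η := lt_min (by linarith [hμ.2]) (div_pos (by linarith) hd)
  refine ⟨μ + η, ⟨by linarith, by linarith [min_le_left (1 - μ) ((r - ρ) / dist c₁ c₂)]⟩,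
    (hσ.mapsTo_closedBall_max hball).mono_right (closedBall_subset_closedBall' ?_)⟩
  rw [dist_lineMap_lineMap, Real.dist_eq, sub_add_cancel_left, abs_neg, abs_of_pos hη]
  have := (le_div_iff₀ hd).1 (min_le_right (1 - μ) ((r - ρ) / dist c₁ c₂))
  linarith

theorem IsKConstrained.not_mapsTo_crescent (hσ : IsKConstrained (1 / r) s σ σ' σ'') (hs : 0 < s)
    (h0₁ : dist (σ 0) c₁ = r) (h0₂ : dist (σ 0) c₂ = r)
    (hs₁ : dist (σ s) c₁ = r) (hs₂ : dist (σ s) c₂ = r) (hc : c₁ ≠ c₂) :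
    ¬ MapsTo σ (Ioo 0 s) (crescent c₁ c₂ r) := by
  intro hcres
  set G := {μ ∈ Icc (0 : ℝ) 1 | MapsTo σ (Icc 0 s) (closedBall (lineMap c₁ c₂ μ) r)}
  have hball₁ : MapsTo σ (Icc 0 s) (closedBall c₁ r) := by
    intro t ht
    rcases eq_endpoints_or_mem_Ioo_of_mem_Icc ht with rfl | rfl | ht
    exacts [h0₁.le, hs₁.le, ball_subset_closedBall (crescent_subset_ball (hcres ht))]
  obtain ⟨ε, hεG, hε⟩ : ∃ ε ∈ G, 0 < ε := by
    obtain ⟨ε, hmaps, hε⟩ := ((eventually_mapsTo_closedBall_lineMap hσ.continuousOn hball₁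
      (hcres.mono_right crescent_subset_ball) (inner_sub_sub_pos_of_dist_eq (h0₁.trans h0₂.symm) hc)
      (inner_sub_sub_pos_of_dist_eq (hs₁.trans hs₂.symm) hc)).and (Ioo_mem_nhdsGT one_pos)).exists
    exact ⟨ε, ⟨Ioo_subset_Icc_self hε, hmaps⟩, hε.1⟩
  have hGclosed : IsClosed G := by
    have : G = Icc 0 1 ∩ ⋂ t ∈ Icc 0 s, {μ | dist (σ t) (lineMap c₁ c₂ μ) ≤ r} := by
      ext μ; simp [G, MapsTo]
    rw [this]
    exact isClosed_Icc.inter <| isClosed_biInter fun t _ =>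
      isClosed_le (continuous_const.dist lineMap_continuous) continuous_const
  have hbdd : BddAbove G := ⟨1, fun μ hμ => hμ.1.2⟩
  have hsupG : sSup G ∈ G := hGclosed.csSup_mem ⟨ε, hεG⟩ hbdd
  have hsup0 : 0 < sSup G := hε.trans_le (le_csSup hbdd hεG)
  have hsup1 : sSup G ≠ 1 := by
    intro h
    have hmid : s / 2 ∈ Ioo 0 s := ⟨half_pos hs, half_lt_self hs⟩
    have := hsupG.2 (Ioo_subset_Icc_self hmid)
    rw [h, lineMap_apply_one] at this
    exact (hcres hmid).2 this
  obtain ⟨μ, hμ, hμG⟩ := hσ.exists_gt_mapsTo_closedBall_lineMap h0₁ h0₂ hs₁ hs₂ hc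
    ⟨hsup0, hsupG.1.2.lt_of_ne hsup1⟩ hsupG.2
  exact (le_csSup hbdd ⟨⟨hsup0.le.trans hμ.1.le, hμ.2⟩, hμG⟩).not_gt hμ.1

end SlidingDisk

theorem no_curve_in_E_general (r s : ℝ)
    (x y c₁ c₂ : Plane)
    (hd : 0 < dist x y)
    (hc₁x : dist c₁ x = r) (hc₁y : dist c₁ y = r)
    (hc₂x : dist c₂ x = r) (hc₂y : dist c₂ y = r)
    (hcc : c₁ ≠ c₂)
    (σ σ' σ'' : ℝ → Plane)
    (hσ : IsKConstrained (1 / r) s σ σ' σ'')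
    (hx : σ 0 = x) (hy : σ s = y)
    (hE : ∀ t ∈ Ioo (0:ℝ) s,
        σ t ∈ interior (closedBall c₁ r ∪ closedBall c₂ r) \
              closure (interior (closedBall c₁ r ∩ closedBall c₂ r))) :
    False := by
  subst hx hy
  rw [dist_comm] at hc₁x hc₁y hc₂x hc₂y
  have hs : 0 < s := hσ.1.lt_of_ne (by rintro rfl; simp at hd)
  have hmid : ∀ c, dist (σ 0) c = r → dist (σ s) c = r → midpoint ℝ (σ 0) (σ s) ∈ ball c r :=
    fun c h0 hs => openSegment_subset_ball_of_ne (mem_closedBall.2 h0.le) (mem_closedBall.2 hs.le)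
      (dist_pos.1 hd) (midpoint_mem_openSegment _ _)
  have hlens : (interior (closedBall c₁ r ∩ closedBall c₂ r)).Nonempty :=
    ⟨_, (isOpen_ball.inter isOpen_ball).subset_interior_iff.2
      (inter_subset_inter ball_subset_closedBall ball_subset_closedBall)
      ⟨hmid c₁ hc₁x hc₁y, hmid c₂ hc₂x hc₂y⟩⟩
  have hcres : MapsTo σ (Ioo 0 s) (crescent c₁ c₂ r ∪ crescent c₂ c₁ r) :=
    fun t ht => interior_union_diff_closure_interior_inter_subset_crescent hlens (hE t ht)
  rcases (isPreconnected_Ioo.image σ (hσ.continuousOn.mono Ioo_subset_Icc_self)).subset_or_subset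
    isOpen_crescent isOpen_crescent disjoint_crescent_swap hcres.image_subset with h | h
  · exact hσ.not_mapsTo_crescent hs hc₁x hc₂x hc₁y hc₂y hcc (mapsTo_iff_image_subset.2 h)
  · exact hσ.not_mapsTo_crescent hs hc₂x hc₁x hc₂y hc₁y hcc.symm (mapsTo_iff_image_subset.2 h)

/-- For 0 < dist(x,y) < 2r, no (1/r)-constrained curve from x to y can have its
interior image inside E = int(D₁ ∪ D₂) \ cl(I). -/
theorem no_curve_in_E (r s : ℝ) (hr : 0 < r)
    (x y c₁ c₂ : Plane)
    (hd : 0 < dist x y) (hd2 : dist x y < 2 * r)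
    (hc₁x : dist c₁ x = r) (hc₁y : dist c₁ y = r)
    (hc₂x : dist c₂ x = r) (hc₂y : dist c₂ y = r)
    (hcc : c₁ ≠ c₂)
    (σ σ' σ'' : ℝ → Plane)
    (hσ : IsKConstrained (1 / r) s σ σ' σ'')
    (hx : σ 0 = x) (hy : σ s = y)
    (hE : ∀ t ∈ Ioo (0:ℝ) s,
        σ t ∈ interior (closedBall c₁ r ∪ closedBall c₂ r) \
              closure (interior (closedBall c₁ r ∩ closedBall c₂ r))) :
    False :=
  no_curve_in_E_general r s x y c₁ c₂ hd hc₁x hc₁y hc₂x hc₂y hcc σ σ' σ'' hσ hx hy hE
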